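/- arXiv:1909.11565 — 2 statements merged into one kernel-verified Lean document; each statement's English description precedes it below -/
import Mathlib

section
/- Let G=(V,E) be a simple, connected, d-regular graph. If a vertex x∈V is Ricci flat, then κ₀(x,y) ≥ 0 for every edge {x,y}∈E. -/
open Filter
open scoped Classical

variable {V : Type*}

/-- The probability measure `μ_x^p` with idleness parameter `p`, on a `d`-regular graph:
`μ_x^p(x) = p`, `μ_x^p(z) = (1-p)/d` for `z` adjacent to `x`, and `0` otherwise. -/
noncomputable def muMeasure (G : SimpleGraph V) (d : ℕ) (p : ℝ) (x : V) : V → ℝ :=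
  fun z => if z = x then p else if G.Adj x z then (1 - p) / d else 0

/-- `π` is a transport plan transporting `μ₁` to `μ₂`. -/
def IsTransportPlan (μ₁ μ₂ : V → ℝ) (π : V → V → ℝ) : Prop :=
  (∀ u v, 0 ≤ π u v) ∧ (∀ u, ∑' v, π u v = μ₁ u) ∧ (∀ v, ∑' u, π u v = μ₂ v)

/-- The cost of a transport plan: `∑_{u,v} d(u,v) π(u,v)`. -/
noncomputable def transportCost (G : SimpleGraph V) (π : V → V → ℝ) : ℝ :=
  ∑' q : V × V, (G.dist q.1 q.2 : ℝ) * π q.1 q.2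

/-- The Wasserstein distance `W₁(μ₁, μ₂)`: infimum of costs over all transport plans. -/
noncomputable def W1 (G : SimpleGraph V) (μ₁ μ₂ : V → ℝ) : ℝ :=
  sInf {c : ℝ | ∃ π, IsTransportPlan μ₁ μ₂ π ∧ transportCost G π = c}

/-- The `p`-Ollivier Ricci curvature `κ_p(x,y) = 1 - W₁(μ_x^p, μ_y^p)` in a `d`-regular graph. -/
noncomputable def kappa (G : SimpleGraph V) (d : ℕ) (p : ℝ) (x y : V) : ℝ :=
  1 - W1 G (muMeasure G d p x) (muMeasure G d p y)

/-- The Lin–Lu–Yau curvature `κ_LLY(x,y) = lim_{p→1} κ_p(x,y)/(1-p)`. -/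
noncomputable def kappaLLY (G : SimpleGraph V) (d : ℕ) (x y : V) : ℝ :=
  limUnder (nhdsWithin 1 (Set.Iio (1 : ℝ))) fun p => kappa G d p x y / (1 - p)

/-- The closed ball of radius 1 around `x`. -/
def closedBall1 (G : SimpleGraph V) (x : V) : Set V := insert x (G.neighborSet x)

/-- The maps `η_i : B₁(x) → V`, `1 ≤ i ≤ d`, witness Ricci flatness at `x`:
(i) `η_i(u) ∼ u` for all `u ∈ B₁(x)`; (ii) `η_i(u) ≠ η_j(u)` for `i ≠ j`;
(iii) `⋃_j η_j(η_i(x)) = ⋃_j η_i(η_j(x))` for all `i`. -/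
def IsRicciFlatMaps (G : SimpleGraph V) (d : ℕ) (x : V) (η : Fin d → V → V) : Prop :=
  (∀ i, ∀ u ∈ closedBall1 G x, G.Adj u (η i u)) ∧
  (∀ i j, i ≠ j → ∀ u ∈ closedBall1 G x, η i u ≠ η j u) ∧
  (∀ i, Set.range (fun j => η j (η i x)) = Set.range (fun j => η i (η j x)))

/-- `x` is Ricci flat. -/
def RicciFlatAt (G : SimpleGraph V) (d : ℕ) (x : V) : Prop :=
  ∃ η : Fin d → V → V, IsRicciFlatMaps G d x η

/-- `x` is (R)-Ricci flat: in addition `η_i(η_i(x)) = x` for all `i`. -/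
def RRicciFlatAt (G : SimpleGraph V) (d : ℕ) (x : V) : Prop :=
  ∃ η : Fin d → V → V, IsRicciFlatMaps G d x η ∧ ∀ i, η i (η i x) = x

/-- `x` is (S)-Ricci flat: in addition `η_j(η_i(x)) = η_i(η_j(x))` for all `i, j`. -/
def SRicciFlatAt (G : SimpleGraph V) (d : ℕ) (x : V) : Prop :=
  ∃ η : Fin d → V → V, IsRicciFlatMaps G d x η ∧ ∀ i j, η j (η i x) = η i (η j x)

/-- `x` is (RS)-Ricci flat: both additional conditions hold simultaneously. -/
def RSRicciFlatAt (G : SimpleGraph V) (d : ℕ) (x : V) : Prop :=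
  ∃ η : Fin d → V → V, IsRicciFlatMaps G d x η ∧ (∀ i, η i (η i x) = x) ∧
    (∀ i j, η j (η i x) = η i (η j x))

/-! Let `y = η_k x`. The neighbours of `x` are the `η_j x`, and by condition (iii) `η_k` sends
them onto the `η_j y`, i.e. onto the neighbours of `y`; by regularity this is a bijection, and it
moves every vertex by one step. Transporting the mass `1/d` of each neighbour `u` of `x` to
`η_k u` therefore costs exactly `1`, so `W₁(μ_x^0, μ_y^0) ≤ 1`. -/

section TransportMap

variable {μ₁ μ₂ : V → ℝ} {σ : V → V}

noncomputable def mapPlan (μ : V → ℝ) (σ : V → V) : V → V → ℝ :=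
  fun u v => if v = σ u then μ u else 0

theorem isTransportPlan_mapPlan {s : Set V} (hμ₁ : ∀ u, 0 ≤ μ₁ u) (hs : ∀ u ∉ s, μ₁ u = 0)
    (hσ : Set.InjOn σ s) (hmap : ∀ u ∈ s, μ₂ (σ u) = μ₁ u) (hout : ∀ v ∉ σ '' s, μ₂ v = 0) :
    IsTransportPlan μ₁ μ₂ (mapPlan μ₁ σ) := by
  refine ⟨fun u v => by unfold mapPlan; split_ifs <;> simp [hμ₁], fun u => tsum_ite_eq _ _,
    fun v => ?_⟩
  by_cases hv : v ∈ σ '' s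
  · obtain ⟨u₀, hu₀, rfl⟩ := hv
    rw [tsum_eq_single u₀, mapPlan, if_pos rfl, hmap u₀ hu₀]
    intro u hu
    by_cases hus : u ∈ s
    · exact if_neg fun h => hu (hσ hus hu₀ h.symm)
    · simp [mapPlan, hs u hus]
  · rw [hout v hv]
    refine (tsum_congr fun u => ?_).trans tsum_zero
    by_cases hus : u ∈ s
    · exact if_neg fun h => hv ⟨u, hus, h.symm⟩
    · simp [mapPlan, hs u hus]

theorem transportCost_mapPlan (G : SimpleGraph V) {s : Finset V} (hs : ∀ u ∉ s, μ₁ u = 0) :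
    transportCost G (mapPlan μ₁ σ) = ∑ u ∈ s, (G.dist u (σ u) : ℝ) * μ₁ u := by
  have hsupp : ∀ q ∉ s.image (fun u => (u, σ u)),
      (G.dist q.1 q.2 : ℝ) * mapPlan μ₁ σ q.1 q.2 = 0 := by
    rintro ⟨u, v⟩ hq
    by_cases hv : v = σ u
    · subst hv
      have hu : u ∉ s := fun hu => hq (Finset.mem_image_of_mem _ hu)
      simp [mapPlan, hs u hu]
    · simp [mapPlan, hv]
  rw [transportCost, tsum_eq_sum hsupp, Finset.sum_image fun _ _ _ _ h => congrArg Prod.fst h]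
  simp [mapPlan]

end TransportMap

theorem transportCost_nonneg (G : SimpleGraph V) {π : V → V → ℝ} (hπ : ∀ u v, 0 ≤ π u v) :
    0 ≤ transportCost G π :=
  tsum_nonneg fun _ => mul_nonneg (Nat.cast_nonneg _) (hπ _ _)

theorem W1_le_transportCost (G : SimpleGraph V) {μ₁ μ₂ : V → ℝ} {π : V → V → ℝ}
    (hπ : IsTransportPlan μ₁ μ₂ π) : W1 G μ₁ μ₂ ≤ transportCost G π :=
  csInf_le ⟨0, by rintro _ ⟨π', hπ', rfl⟩; exact transportCost_nonneg G hπ'.1⟩ ⟨π, hπ, rfl⟩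

theorem W1_muMeasure_zero_le_of_bijOn_neighborSet (G : SimpleGraph V) (d : ℕ) {x y : V}
    [Fintype (G.neighborSet x)] {σ : V → V}
    (hσ : Set.BijOn σ (G.neighborSet x) (G.neighborSet y))
    (hadj : ∀ u ∈ G.neighborSet x, G.Adj u (σ u)) :
    W1 G (muMeasure G d 0 x) (muMeasure G d 0 y) ≤ G.degree x / d := by
  have hs : ∀ u ∉ G.neighborSet x, muMeasure G d 0 x u = 0 := fun u hu => by
    simp only [muMeasure]
    split_ifs <;> simp_all
  have hsFin : ∀ u ∉ G.neighborFinset x, muMeasure G d 0 x u = 0 := fun u hu =>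
    hs u (by rwa [← SimpleGraph.coe_neighborFinset, Finset.mem_coe])
  have hplan : IsTransportPlan (muMeasure G d 0 x) (muMeasure G d 0 y)
      (mapPlan (muMeasure G d 0 x) σ) := by
    refine isTransportPlan_mapPlan (fun u => ?_) hs hσ.injOn (fun u hu => ?_) (fun v hv => ?_)
    · unfold muMeasure; split_ifs <;> positivity
    · have hyu : G.Adj y (σ u) := hσ.mapsTo hu
      simp [muMeasure, hyu, hyu.ne.symm, (G.mem_neighborSet x u).1 hu,
        ((G.mem_neighborSet x u).1 hu).ne.symm]
    · rw [hσ.image_eq] at hv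
      simp only [muMeasure]
      split_ifs <;> simp_all
  refine (W1_le_transportCost G hplan).trans_eq ?_
  rw [transportCost_mapPlan G hsFin, ← SimpleGraph.card_neighborFinset_eq_degree,
    Finset.sum_congr rfl fun u hu => ?_, Finset.sum_const, nsmul_eq_mul, mul_one_div]
  have hxu := (G.mem_neighborFinset x u).1 hu
  simp [muMeasure, SimpleGraph.dist_eq_one_iff_adj.2 (hadj u hxu), hxu, hxu.ne.symm]

theorem range_eq_neighborSet_of_injective (G : SimpleGraph V) {u : V} [Fintype (G.neighborSet u)]
    {d : ℕ} {f : Fin d → V} (hf : Function.Injective f) (hadj : ∀ j, G.Adj u (f j))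
    (hdeg : G.degree u = d) : Set.range f = G.neighborSet u := by
  rw [← Set.image_univ, ← Finset.coe_univ, ← Finset.coe_image, ← SimpleGraph.coe_neighborFinset]
  congr 1
  refine Finset.eq_of_subset_of_card_le (fun v hv => ?_) ?_
  · obtain ⟨j, -, rfl⟩ := Finset.mem_image.1 hv
    exact (G.mem_neighborFinset u _).2 (hadj j)
  · rw [Finset.card_image_of_injective _ hf, SimpleGraph.card_neighborFinset_eq_degree, hdeg,
      Finset.card_univ, Fintype.card_fin]

theorem Function.injective_of_range_eq {ι : Type*} [Fintype ι] {f g : ι → V}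
    (hg : Function.Injective g) (h : Set.range f = Set.range g) : Function.Injective f := by
  have himage : Finset.univ.image f = Finset.univ.image g := by
    apply Finset.coe_injective
    simpa only [Finset.coe_image, Finset.coe_univ, Set.image_univ] using h
  have hcard : (Finset.univ.image f).card = (Finset.univ : Finset ι).card := by
    rw [himage, Finset.card_image_of_injective _ hg]
  exact fun a b hab => Finset.card_image_iff.1 hcard (by simp) (by simp) hab

namespace IsRicciFlatMaps

variable {G : SimpleGraph V} {d : ℕ} {x : V} {η : Fin d → V → V}

theorem injective_apply (hη : IsRicciFlatMaps G d x η) {u : V} (hu : u ∈ closedBall1 G x) :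
    Function.Injective fun j => η j u :=
  fun i j hij => by_contra fun hne => hη.2.1 i j hne u hu hij

theorem range_apply_eq_neighborSet [G.LocallyFinite] (hreg : G.IsRegularOfDegree d)
    (hη : IsRicciFlatMaps G d x η) {u : V} (hu : u ∈ closedBall1 G x) :
    Set.range (fun j => η j u) = G.neighborSet u :=
  range_eq_neighborSet_of_injective G (hη.injective_apply hu) (fun j => hη.1 j u hu) (hreg u)

theorem bijOn_neighborSet [G.LocallyFinite] (hreg : G.IsRegularOfDegree d)
    (hη : IsRicciFlatMaps G d x η) (k : Fin d) :
    Set.BijOn (η k) (G.neighborSet x) (G.neighborSet (η k x)) := by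
  have hx : x ∈ closedBall1 G x := Set.mem_insert x _
  have hy : η k x ∈ closedBall1 G x := Set.mem_insert_of_mem x (hη.1 k x hx)
  have hrange : Set.range (η k ∘ fun j => η j x) = Set.range fun j => η j (η k x) :=
    (hη.2.2 k).symm
  have hinj : Function.Injective (η k ∘ fun j => η j x) :=
    Function.injective_of_range_eq (hη.injective_apply hy) hrange
  rw [← hη.range_apply_eq_neighborSet hreg hx, ← hη.range_apply_eq_neighborSet hreg hy,
    ← hrange, Set.range_comp]
  exact hinj.injOn_range.bijOn_image

end IsRicciFlatMaps

theorem stmt_2_general (G : SimpleGraph V) [G.LocallyFinite]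
    (d : ℕ) (hreg : G.IsRegularOfDegree d) (x : V) (hx : RicciFlatAt G d x) :
    ∀ y : V, G.Adj x y → 0 ≤ kappa G d 0 x y := by
  intro y hxy
  obtain ⟨η, hη⟩ := hx
  obtain ⟨k, rfl⟩ : ∃ k, η k x = y := by
    rw [← Set.mem_range, hη.range_apply_eq_neighborSet hreg (Set.mem_insert x _)]
    exact hxy
  have hd : (d : ℝ) ≠ 0 := by
    rw [Nat.cast_ne_zero, ← hreg x]
    exact (G.degree_pos_iff_exists_adj x).2 ⟨_, hxy⟩ |>.ne'
  have hW := W1_muMeasure_zero_le_of_bijOn_neighborSet G d (hη.bijOn_neighborSet hreg k)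
    fun u hu => hη.1 k u (Set.mem_insert_of_mem x hu)
  rw [hreg x, div_self hd] at hW
  rw [kappa]
  linarith

/-- In a simple, connected, `d`-regular graph, if `x` is Ricci flat then
`κ₀(x,y) ≥ 0` for every edge `{x,y}`. -/
theorem stmt_2 (G : SimpleGraph V) [G.LocallyFinite] (hconn : G.Connected)
    (d : ℕ) (hreg : G.IsRegularOfDegree d) (x : V) (hx : RicciFlatAt G d x) :
    ∀ y : V, G.Adj x y → 0 ≤ kappa G d 0 x y :=
  stmt_2_general G d hreg x hx
end

section
/- Let G=(V,E) be a simple, connected, d-regular graph. If a vertex x∈V is (R)-Ricci flat, then Γ₂(f)(x) ≥ 2·Γ(f)(x) for every function f:V→ℝ; in particular, the Bakry–Émery curvature satisfies K_∞(x) ≥ 2. -/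
open Filter
open scoped Classical

variable {V : Type*}

/-- The (non-normalized) graph Laplacian `Δf(x) = ∑_{y ∼ x} (f(y) - f(x))`. -/
noncomputable def graphLap (G : SimpleGraph V) [G.LocallyFinite] (f : V → ℝ) (x : V) : ℝ :=
  ∑ y ∈ G.neighborFinset x, (f y - f x)

/-- The operator `Γ`: `2Γ(f,g) = Δ(fg) - fΔg - gΔf`. -/
noncomputable def gammaOp (G : SimpleGraph V) [G.LocallyFinite] (f g : V → ℝ) (x : V) : ℝ :=
  (graphLap G (fun z => f z * g z) x - f x * graphLap G g x - g x * graphLap G f x) / 2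

/-- The operator `Γ₂`: `2Γ₂(f) = ΔΓ(f) - 2Γ(f, Δf)`, where `Γ(f) = Γ(f,f)`. -/
noncomputable def gamma2Op (G : SimpleGraph V) [G.LocallyFinite] (f : V → ℝ) (x : V) : ℝ :=
  (graphLap G (fun z => gammaOp G f f z) x - 2 * gammaOp G f (graphLap G f) x) / 2

/-- The set of lower Bakry–Émery curvature bounds at `x`: all `K` such that
`Γ₂(f)(x) ≥ K·Γ(f)(x)` for every `f : V → ℝ`.  The Bakry–Émery curvature `K_∞(x)` is the
largest element of this set. -/
def curvBounds (G : SimpleGraph V) [G.LocallyFinite] (x : V) : Set ℝ :=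
  {K : ℝ | ∀ f : V → ℝ, K * gammaOp G f f x ≤ gamma2Op G f x}

/-!
Write `p i = f (η_i x)`, `q i j = f (η_j (η_i x))` and `c = f x`. Expanding the definitions,
`4 Γ₂(f)(x)` is a quadratic expression in these numbers, and condition (iii) says exactly that the
row sums and the column sums of `q` agree. That makes the cross terms cancel, leaving the sum of
squares `4 Γ₂(f)(x) = ∑_{i,j} (q i j - p i - p j + c)²`. The (R) condition `q i i = c` makes
the diagonal terms equal to `4 (p i - c)²`, whose sum is `8 Γ(f)(x)`.
-/

section SquareSums

variable {ι : Type*} [Fintype ι] (p : ι → ℝ) (q : ι → ι → ℝ) (c : ℝ)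

theorem sum_sub_two_mul_sum_eq_sum_sum_sq (hcomm : ∀ i, ∑ j, q j i = ∑ j, q i j) :
    ∑ i, (∑ j, (q i j - p i) ^ 2 - ∑ j, (p j - c) ^ 2)
        - 2 * ∑ i, (p i - c) * (∑ j, (q i j - p i) - ∑ j, (p j - c))
      = ∑ i, ∑ j, (q i j - p i - p j + c) ^ 2 := by
  set H : ι → ℝ := fun k => 2 * (p k - c) ^ 2 + 2 * c * p k
  have hq : ∑ i, ∑ j, q i j * (p i - p j) = 0 := by
    simp only [mul_sub, Finset.sum_sub_distrib, ← Finset.sum_mul]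
    rw [Finset.sum_comm, sub_eq_zero]
    exact Finset.sum_congr rfl fun j _ => by rw [← Finset.sum_mul, hcomm]
  have hH : ∑ i : ι, ∑ j : ι, (H j - H i) = 0 := by
    simp only [Finset.sum_sub_distrib]
    rw [Finset.sum_comm, sub_self]
  have hterm : ∀ i j, (q i j - p i - p j + c) ^ 2
      = ((q i j - p i) ^ 2 - (p j - c) ^ 2 - 2 * ((p i - c) * ((q i j - p i) - (p j - c))))
        + (2 * (q i j * (p i - p j)) + (H j - H i)) := fun i j => by simp only [H]; ring
  simp only [hterm, Finset.sum_add_distrib, ← Finset.mul_sum, hq, hH, mul_zero, add_zero]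
  simp only [Finset.sum_sub_distrib, Finset.mul_sum, mul_sub]

theorem four_mul_sum_sq_le_of_sum_comm (hdiag : ∀ i, q i i = c)
    (hcomm : ∀ i, ∑ j, q j i = ∑ j, q i j) :
    4 * ∑ i, (p i - c) ^ 2 ≤ ∑ i, (∑ j, (q i j - p i) ^ 2 - ∑ j, (p j - c) ^ 2)
        - 2 * ∑ i, (p i - c) * (∑ j, (q i j - p i) - ∑ j, (p j - c)) := by
  rw [sum_sub_two_mul_sum_eq_sum_sum_sq p q c hcomm, Finset.mul_sum]
  refine Finset.sum_le_sum fun i _ => ?_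
  calc 4 * (p i - c) ^ 2 = (q i i - p i - p i + c) ^ 2 := by rw [hdiag]; ring
    _ ≤ ∑ j, (q i j - p i - p j + c) ^ 2 :=
      Finset.single_le_sum (f := fun j => (q i j - p i - p j + c) ^ 2)
        (fun j _ => sq_nonneg _) (Finset.mem_univ i)

end SquareSums

theorem Fintype.sum_comp_eq_of_range_eq {ι α M : Type*} [Fintype ι] [DecidableEq α]
    [AddCommMonoid M] {e e' : ι → α} (he : Function.Injective e)
    (hrange : Set.range e = Set.range e') (φ : α → M) :
    ∑ i, φ (e i) = ∑ i, φ (e' i) := by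
  have himage : Finset.univ.image e = Finset.univ.image e' := by
    apply Finset.coe_injective
    simpa only [Finset.coe_image, Finset.coe_univ, Set.image_univ] using hrange
  have he' : Set.InjOn e' (Finset.univ : Finset ι) := Finset.injOn_of_card_image_eq <| by
    rw [← himage, Finset.card_image_of_injective _ he]
  rw [← Finset.sum_image fun i _ j _ h => he h, ← Finset.sum_image fun i hi j hj h => he' hi hj h,
    himage]

theorem SimpleGraph.sum_neighborFinset_eq_sum_of_injective {ι : Type*} [Fintype ι]
    {G : SimpleGraph V} [G.LocallyFinite] {M : Type*} [AddCommMonoid M] {u : V} {e : ι → V}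
    (hcard : Fintype.card ι = G.degree u) (he : Function.Injective e)
    (hadj : ∀ i, G.Adj u (e i)) (φ : V → M) :
    ∑ y ∈ G.neighborFinset u, φ y = ∑ i, φ (e i) := by
  have himage : Finset.univ.map ⟨e, he⟩ = G.neighborFinset u :=
    Finset.eq_of_subset_of_card_le (fun y hy => by
      obtain ⟨i, -, rfl⟩ := Finset.mem_map.1 hy
      exact (G.mem_neighborFinset u _).2 (hadj i))
      (by rw [Finset.card_map, Finset.card_univ, hcard, card_neighborFinset_eq_degree])
  rw [← himage, Finset.sum_map]
  rfl

section Enumeration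

variable {ι : Type*} [Fintype ι] {G : SimpleGraph V} [G.LocallyFinite]

theorem gammaOp_eq_sum (f g : V → ℝ) (z : V) :
    gammaOp G f g z = (∑ y ∈ G.neighborFinset z, (f y - f z) * (g y - g z)) / 2 := by
  unfold gammaOp graphLap
  rw [Finset.mul_sum, Finset.mul_sum, ← Finset.sum_sub_distrib, ← Finset.sum_sub_distrib]
  congr 1
  exact Finset.sum_congr rfl fun y _ => by ring

theorem graphLap_eq_sum_of_enum {u : V} {e : ι → V}
    (hsum : ∀ φ : V → ℝ, ∑ y ∈ G.neighborFinset u, φ y = ∑ i, φ (e i)) (f : V → ℝ) :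
    graphLap G f u = ∑ i, (f (e i) - f u) :=
  hsum _

theorem two_mul_gammaOp_eq_sum_of_enum {u : V} {e : ι → V}
    (hsum : ∀ φ : V → ℝ, ∑ y ∈ G.neighborFinset u, φ y = ∑ i, φ (e i)) (f g : V → ℝ) :
    2 * gammaOp G f g u = ∑ i, (f (e i) - f u) * (g (e i) - g u) := by
  rw [gammaOp_eq_sum, hsum]
  ring

theorem two_mul_gammaOp_self_eq_sum_sq_of_enum {u : V} {e : ι → V}
    (hsum : ∀ φ : V → ℝ, ∑ y ∈ G.neighborFinset u, φ y = ∑ i, φ (e i)) (f : V → ℝ) :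
    2 * gammaOp G f f u = ∑ i, (f (e i) - f u) ^ 2 := by
  simp only [two_mul_gammaOp_eq_sum_of_enum hsum, sq]

theorem four_mul_gamma2Op_eq_sum_of_enum {x : V} {η : ι → V → V}
    (hx : ∀ φ : V → ℝ, ∑ y ∈ G.neighborFinset x, φ y = ∑ i, φ (η i x))
    (hy : ∀ i, ∀ φ : V → ℝ, ∑ y ∈ G.neighborFinset (η i x), φ y = ∑ j, φ (η j (η i x)))
    (f : V → ℝ) :
    4 * gamma2Op G f x
      = ∑ i, (∑ j, (f (η j (η i x)) - f (η i x)) ^ 2 - ∑ j, (f (η j x) - f x) ^ 2)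
        - 2 * ∑ i, (f (η i x) - f x)
            * (∑ j, (f (η j (η i x)) - f (η i x)) - ∑ j, (f (η j x) - f x)) := by
  have hΔΓ : 2 * graphLap G (fun z => gammaOp G f f z) x
      = ∑ i, (∑ j, (f (η j (η i x)) - f (η i x)) ^ 2 - ∑ j, (f (η j x) - f x) ^ 2) := by
    rw [graphLap_eq_sum_of_enum hx, Finset.mul_sum]
    exact Finset.sum_congr rfl fun i _ => by
      rw [mul_sub, two_mul_gammaOp_self_eq_sum_sq_of_enum (hy i),
        two_mul_gammaOp_self_eq_sum_sq_of_enum hx]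
  have hΓΔ : 2 * gammaOp G f (graphLap G f) x
      = ∑ i, (f (η i x) - f x)
          * (∑ j, (f (η j (η i x)) - f (η i x)) - ∑ j, (f (η j x) - f x)) := by
    rw [two_mul_gammaOp_eq_sum_of_enum hx]
    exact Finset.sum_congr rfl fun i _ => by
      rw [graphLap_eq_sum_of_enum (hy i), graphLap_eq_sum_of_enum hx]
  rw [gamma2Op]
  linarith

end Enumeration

theorem stmt_5_general (G : SimpleGraph V) [G.LocallyFinite]
    (d : ℕ) (hreg : G.IsRegularOfDegree d) (x : V) (hx : RRicciFlatAt G d x) :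
    (∀ f : V → ℝ, 2 * gammaOp G f f x ≤ gamma2Op G f x) ∧ 2 ∈ curvBounds G x := by
  obtain ⟨η, ⟨hadj, hdistinct, hrange⟩, hinv⟩ := hx
  have hinj : ∀ u ∈ closedBall1 G x, Function.Injective fun i => η i u :=
    fun u hu i j hij => by_contra fun hne => hdistinct i j hne u hu hij
  have henum : ∀ u ∈ closedBall1 G x, ∀ φ : V → ℝ,
      ∑ y ∈ G.neighborFinset u, φ y = ∑ i, φ (η i u) := fun u hu =>
    G.sum_neighborFinset_eq_sum_of_injective (by rw [Fintype.card_fin, hreg u]) (hinj u hu)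
      fun i => hadj i u hu
  have hx_mem : x ∈ closedBall1 G x := Set.mem_insert x _
  have hη_mem : ∀ i, η i x ∈ closedBall1 G x := fun i =>
    Set.mem_insert_of_mem x (hadj i x hx_mem)
  have hbound : ∀ f : V → ℝ, 2 * gammaOp G f f x ≤ gamma2Op G f x := fun f => by
    have hΓ := two_mul_gammaOp_self_eq_sum_sq_of_enum (henum x hx_mem) f
    have hΓ₂ := four_mul_gamma2Op_eq_sum_of_enum (henum x hx_mem)
      (fun i => henum _ (hη_mem i)) f
    have hsq := four_mul_sum_sq_le_of_sum_comm (fun i => f (η i x))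
      (fun i j => f (η j (η i x))) (f x) (fun i => congrArg f (hinv i))
      fun i => (Fintype.sum_comp_eq_of_range_eq (hinj _ (hη_mem i)) (hrange i) f).symm
    linarith
  exact ⟨hbound, hbound⟩

/-- In a simple, connected, `d`-regular graph, if `x` is (R)-Ricci flat then
`Γ₂(f)(x) ≥ 2·Γ(f)(x)` for every `f : V → ℝ`; in particular the Bakry–Émery curvature
satisfies `K_∞(x) ≥ 2` (that is, `2` is a lower curvature bound at `x`). -/
theorem stmt_5 (G : SimpleGraph V) [G.LocallyFinite] (hconn : G.Connected)
    (d : ℕ) (hreg : G.IsRegularOfDegree d) (x : V) (hx : RRicciFlatAt G d x) :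
    (∀ f : V → ℝ, 2 * gammaOp G f f x ≤ gamma2Op G f x) ∧ 2 ∈ curvBounds G x :=
  stmt_5_general G d hreg x hx
end
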